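/- T_H semantically entails H⁺ ∈ H⁺. -/

import Mathlib

/-! `H⁺` is `A[A]`, so the second disjunct of the axiom for `A` puts `⟨A, H⁺⟩` into `A`
(pairing supplies this Kuratowski pair), and the axiom for `H⁺` then reads off `H⁺ ∈ H⁺`. -/

open FirstOrder FirstOrder.Language

namespace CoRussellParadox

/-- The language `L'` with a single binary relation symbol `∈` and four constant
symbols `A`, `B`, `H⁺`, `H⁻` (coded as `Fin 4`). -/
def L : Language :=
  ⟨fun n => match n with | 0 => Fin 4 | _ => Empty,
   fun n => match n with | 2 => Unit | _ => Empty⟩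

/-- The membership relation symbol. -/
def memRel : L.Relations 2 := Unit.unit

/-- The constant symbol `A`. -/
def cA : L.Constants := (0 : Fin 4)
/-- The constant symbol `B`. -/
def cB : L.Constants := (1 : Fin 4)
/-- The constant symbol `H⁺`. -/
def cHp : L.Constants := (2 : Fin 4)
/-- The constant symbol `H⁻`. -/
def cHm : L.Constants := (3 : Fin 4)

/-- `memF t₁ t₂` is the atomic formula `t₁ ∈ t₂`. -/
def memF {n : ℕ} (t₁ t₂ : L.Term (Empty ⊕ Fin n)) : L.BoundedFormula Empty n :=
  memRel.boundedFormula₂ t₁ t₂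

/-- Inclusion of a term in context `n` into the larger context `n + k`. -/
def tl {n : ℕ} (k : ℕ) (t : L.Term (Empty ⊕ Fin n)) : L.Term (Empty ⊕ Fin (n + k)) :=
  t.relabel (Sum.map id (Fin.castAdd k))

/-- `z = ⟨a,b⟩` (Kuratowski pair), as the formula
`∃p∃q(∀x(x∈p ↔ x=a) ∧ ∀x(x∈q ↔ (x=a ∨ x=b)) ∧ ∀x(x∈z ↔ (x=p ∨ x=q)))`. -/
def isPairF {n : ℕ} (z a b : L.Term (Empty ⊕ Fin n)) : L.BoundedFormula Empty n :=
  ∃' ∃' (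
    (∀' (memF (&⟨n + 2, by omega⟩) (&⟨n, by omega⟩) ⇔
        ((&(⟨n + 2, by omega⟩ : Fin (n + 3))) =' tl 3 a))) ⊓
    (∀' (memF (&⟨n + 2, by omega⟩) (&⟨n + 1, by omega⟩) ⇔
        (((&(⟨n + 2, by omega⟩ : Fin (n + 3))) =' tl 3 a) ⊔
         ((&(⟨n + 2, by omega⟩ : Fin (n + 3))) =' tl 3 b)))) ⊓
    (∀' (memF (&⟨n + 2, by omega⟩) (tl 3 z) ⇔
        (((&(⟨n + 2, by omega⟩ : Fin (n + 3))) =' (&⟨n, by omega⟩)) ⊔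
         ((&(⟨n + 2, by omega⟩ : Fin (n + 3))) =' (&⟨n + 1, by omega⟩))))))

/-- Extensionality: `∀y∀z(∀x(x∈y ↔ x∈z) → y=z)`. -/
def extAx : L.Sentence :=
  ∀' ∀' ((∀' (memF (&2) (&0) ⇔ memF (&2) (&1))) ⟹ ((&0) =' (&1)))

/-- Pairing: `∀a∀b∃y∀x(x∈y ↔ (x=a ∨ x=b))`. -/
def pairAx : L.Sentence :=
  ∀' ∀' ∃' ∀' (memF (&3) (&2) ⇔ (((&3) =' (&0)) ⊔ ((&3) =' (&1))))

/-- Extracting: `∀a∃y∀x(x∈y ↔ ∃z(z=⟨a,x⟩ ∧ z∈a))`. -/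
def extractAx : L.Sentence :=
  ∀' ∃' ∀' (memF (&2) (&1) ⇔ ∃' (isPairF (&3) (&0) (&2) ⊓ memF (&3) (&0)))

/-- `w = v[v]`, i.e. `∀u(u∈w ↔ ∃z(z=⟨v,u⟩ ∧ z∈v))`, here with `v = &1`, `w = &2`
in context `3` (as used in the axioms for `A` and `B`). -/
def wEqExtractF : L.BoundedFormula Empty 3 :=
  ∀' (memF (&3) (&2) ⇔ ∃' (isPairF (&4) (&1) (&3) ⊓ memF (&4) (&1)))

/-- The axiom `∀x(x∈A ↔ ∃v∃w(x=⟨v,w⟩ ∧ (w∈w ∨ w=v[v])))`. -/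
def axA : L.Sentence :=
  ∀' (memF (&0) (Constants.term cA) ⇔
    ∃' ∃' (isPairF (&0) (&1) (&2) ⊓ (memF (&2) (&2) ⊔ wEqExtractF)))

/-- The axiom `∀x(x∈B ↔ ∃v∃w(x=⟨v,w⟩ ∧ (w∈w ∧ ¬w=v[v])))`. -/
def axB : L.Sentence :=
  ∀' (memF (&0) (Constants.term cB) ⇔
    ∃' ∃' (isPairF (&0) (&1) (&2) ⊓ (memF (&2) (&2) ⊓ ∼wEqExtractF)))

/-- The axiom `∀x(x∈H⁺ ↔ ∃z(z=⟨A,x⟩ ∧ z∈A))`. -/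
def axHp : L.Sentence :=
  ∀' (memF (&0) (Constants.term cHp) ⇔
    ∃' (isPairF (&1) (Constants.term cA) (&0) ⊓ memF (&1) (Constants.term cA)))

/-- The axiom `∀x(x∈H⁻ ↔ ∃z(z=⟨B,x⟩ ∧ z∈B))`. -/
def axHm : L.Sentence :=
  ∀' (memF (&0) (Constants.term cHm) ⇔
    ∃' (isPairF (&1) (Constants.term cB) (&0) ⊓ memF (&1) (Constants.term cB)))

/-- The theory `T_H`: extensionality, pairing, extracting, and the defining axioms
of `A`, `B`, `H⁺` and `H⁻`. -/
def TH : L.Theory := {extAx, pairAx, extractAx, axA, axB, axHp, axHm}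

theorem snoc_snoc_snoc_comp_castAdd {M : Type*} {n : ℕ} (xs : Fin n → M) (p q x : M) :
    (Fin.snoc (Fin.snoc (Fin.snoc xs p) q) x : Fin (n + 3) → M) ∘ Fin.castAdd 3 = xs := by
  funext i
  exact (Fin.snoc_castSucc ..).trans <| (Fin.snoc_castSucc ..).trans (Fin.snoc_castSucc ..)

section Semantics

variable {M : Type*} [L.Structure M]

def Mem (x y : M) : Prop := Structure.RelMap memRel ![x, y]

def IsPair (z a b : M) : Prop :=
  ∃ p q : M, (∀ x, Mem x p ↔ x = a) ∧ (∀ x, Mem x q ↔ x = a ∨ x = b) ∧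
    (∀ x, Mem x z ↔ x = p ∨ x = q)

/-- `w = v[v]` in the structure `M`. -/
def IsExtract (w v : M) : Prop :=
  ∀ u, Mem u w ↔ ∃ z, IsPair z v u ∧ Mem z v

@[simp]
theorem realize_memF {n : ℕ} (t₁ t₂ : L.Term (Empty ⊕ Fin n)) (v : Empty → M)
    (xs : Fin n → M) :
    (memF t₁ t₂).Realize v xs ↔ Mem (t₁.realize (Sum.elim v xs)) (t₂.realize (Sum.elim v xs)) :=
  BoundedFormula.realize_rel₂

@[simp]
theorem realize_isPairF {n : ℕ} (z a b : L.Term (Empty ⊕ Fin n)) (v : Empty → M)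
    (xs : Fin n → M) :
    (isPairF z a b).Realize v xs ↔
      IsPair (z.realize (Sum.elim v xs)) (a.realize (Sum.elim v xs))
        (b.realize (Sum.elim v xs)) := by
  simp [isPairF, IsPair, tl, Term.realize_relabel, Fin.snoc, Sum.elim_comp_map,
    snoc_snoc_snoc_comp_castAdd, and_assoc]

theorem exists_isPair_of_realize_pairAx (h : M ⊨ pairAx) (a b : M) : ∃ z, IsPair z a b := by
  have hpair : ∀ a b : M, ∃ y, ∀ x, Mem x y ↔ x = a ∨ x = b := by
    simpa [pairAx, Sentence.Realize, Formula.Realize, Fin.snoc] using h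
  obtain ⟨p, hp⟩ := hpair a a
  obtain ⟨q, hq⟩ := hpair a b
  obtain ⟨z, hz⟩ := hpair p q
  exact ⟨z, p, q, by simpa only [or_self] using hp, hq, hz⟩

theorem realize_axA :
    M ⊨ axA ↔ ∀ x, Mem x (cA : M) ↔ ∃ v w, IsPair x v w ∧ (Mem w w ∨ IsExtract w v) := by
  simp [axA, wEqExtractF, IsExtract, Sentence.Realize, Formula.Realize, Fin.snoc]

theorem realize_axHp : M ⊨ axHp ↔ IsExtract (cHp : M) (cA : M) := by
  simp [axHp, IsExtract, Sentence.Realize, Formula.Realize, Fin.snoc]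

theorem mem_self_of_isExtract (hpair : ∀ a b : M, ∃ z, IsPair z a b) {A H : M}
    (hA : ∀ z v w, IsPair z v w → IsExtract w v → Mem z A) (hH : IsExtract H A) : Mem H H :=
  let ⟨z, hz⟩ := hpair A H
  (hH H).2 ⟨z, hz, hA z A H hz hH⟩

end Semantics

/-- `T_H` semantically entails `H⁺ ∈ H⁺`. -/
theorem TH_Hp_mem_Hp :
    TH ⊨ᵇ ((memF (Constants.term cHp) (Constants.term cHp)) : L.Sentence) := by
  rw [Theory.models_sentence_iff]
  intro M
  have hpair := exists_isPair_of_realize_pairAx (TH.realize_sentence_of_mem (M := M) (by simp [TH]))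
  have hA := realize_axA.1 (TH.realize_sentence_of_mem (M := M) (by simp [TH]))
  have hHp := realize_axHp.1 (TH.realize_sentence_of_mem (M := M) (by simp [TH]))
  have hmem := mem_self_of_isExtract hpair (fun z v w hz hw => (hA z).2 ⟨v, w, hz, .inr hw⟩) hHp
  simpa [Sentence.Realize, Formula.Realize] using hmem

end CoRussellParadox
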